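/- arXiv:2305.10697 — 3 statements merged into one kernel-verified Lean document; each statement's English description precedes it below -/
import Mathlib

section
/- Local error bound between synchronizations (synchronous setting): Assume τη ≤ 1/2. For any given δ ∈ (0,1), with probability at least 1-δ, simultaneously for all 1 ≤ i ≤ T and all agents k ∈ {1,…,K}, ‖Δ_i^k‖_∞ ≤ ‖Δ_{ι(i)}‖_∞ + (2/(1-γ)) · sqrt(η · log(|S||A|KT/δ)), where Δ_i^k = Q* − Q_i^k, Δ_{ι(i)} = Q* − (1/K)Σ_k Q_{ι(i)}^k, and ι(i) = τ⌊i/τ⌋ is the most recent synchronization step until i. -/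
open MeasureTheory ProbabilityTheory

/-- Maximum of a real-valued function over a finite (action) type. -/
noncomputable def vmax {A : Type*} [Fintype A] (f : A → ℝ) : ℝ := ⨆ a, f a

/-- Sup norm of a real-valued function over a finite index type. -/
noncomputable def supNorm {ι : Type*} (f : ι → ℝ) : ℝ := ⨆ i, |f i|

/-!
Between two synchronizations every agent runs plain synchronous Q-learning. Let
`ξ_j = V*(s_j) - (P V*)(s, a)` be the sampling noise of step `j` and
`N_i = ∑_{ι(i) < j ≤ i} η (1 - η)^(i - j) ξ_j` its discounted accumulation since the last
synchronization. The error `e_i = Q* - Q_i + γ N_i` obeys the noise-free recursion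
`e_{i+1} = (1 - η) e_i + η γ (V* - V_i)(s_{i+1})`, so while `|N_j| ≤ λ` its sup norm grows by at
most `ηλ` per step; over fewer than `τ` steps with `τη ≤ 1/2` this gives
`‖Δ_i‖ ≤ ‖Δ_{ι(i)}‖ + 2λ`.

Since `V*` takes values in `[0, 1/(1-γ)]`, Hoeffding's lemma makes `N_i` sub-Gaussian with
variance proxy `τη² / (4(1-γ)²)`. For `λ = √(η log(|S||A|KT/δ)) / (1-γ)` each event `|N_i| ≥ λ`
then has probability at most `2 (δ / |S||A|KT)⁴`, and a union bound over `i`, the agents and the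
state-action pairs finishes the proof.
-/

open Finset Real

section Max

variable {ι : Type*}

lemma abs_le_supNorm [Finite ι] (f : ι → ℝ) (i : ι) : |f i| ≤ supNorm f :=
  le_ciSup (Set.finite_range fun j => |f j|).bddAbove i

lemma supNorm_le [Nonempty ι] {f : ι → ℝ} {c : ℝ} (h : ∀ i, |f i| ≤ c) :
    supNorm f ≤ c :=
  ciSup_le h

variable [Fintype ι]

lemma le_vmax (f : ι → ℝ) (i : ι) : f i ≤ vmax f :=
  le_ciSup (Set.finite_range _).bddAbove i

lemma vmax_le [Nonempty ι] {f : ι → ℝ} {c : ℝ} (h : ∀ i, f i ≤ c) : vmax f ≤ c :=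
  ciSup_le h

lemma vmax_mem_Icc [Nonempty ι] {f : ι → ℝ} {a b : ℝ} (h : ∀ i, f i ∈ Set.Icc a b) :
    vmax f ∈ Set.Icc a b :=
  ⟨(h (Classical.arbitrary ι)).1.trans (le_vmax f _), vmax_le fun i => (h i).2⟩

lemma abs_vmax_sub_vmax_le [Nonempty ι] {f g : ι → ℝ} {c : ℝ}
    (h : ∀ i, |f i - g i| ≤ c) : |vmax f - vmax g| ≤ c := by
  refine abs_sub_le_iff.2 ⟨?_, ?_⟩ <;> rw [sub_le_iff_le_add] <;> refine vmax_le fun i => ?_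
  · linarith [(abs_sub_le_iff.1 (h i)).1, le_vmax g i]
  · linarith [(abs_sub_le_iff.1 (h i)).2, le_vmax f i]

end Max

section Bellman

variable {S A : Type*} [Fintype S] [Fintype A]

noncomputable def stateValue (Q : S × A → ℝ) (s : S) : ℝ := vmax fun a => Q (s, a)

variable [Nonempty S] [Nonempty A]

lemma bellman_fixedPoint_mem_Icc {P : S × A → S → ℝ} {r : S × A → ℝ} {γ : ℝ}
    (hP0 : ∀ sa s', 0 ≤ P sa s') (hP1 : ∀ sa, ∑ s', P sa s' = 1)
    (hr : ∀ sa, r sa ∈ Set.Icc (0 : ℝ) 1) (hγ : γ ∈ Set.Ico (0 : ℝ) 1) {Qstar : S × A → ℝ}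
    (hQstar : ∀ sa, Qstar sa = r sa + γ * ∑ s', P sa s' * stateValue Qstar s')
    (sa : S × A) : Qstar sa ∈ Set.Icc 0 (1 / (1 - γ)) := by
  obtain ⟨hγ0, hγ1⟩ := hγ
  obtain ⟨lo, hlo⟩ := Finite.exists_min Qstar
  obtain ⟨hi, hhi⟩ := Finite.exists_max Qstar
  have hmean : ∀ sa, ∑ s', P sa s' * stateValue Qstar s' ∈ Set.Icc (Qstar lo) (Qstar hi) :=
    fun sa => (convex_Icc _ _).sum_mem (fun s' _ => hP0 sa s') (hP1 sa)
      fun s' _ => vmax_mem_Icc fun a => ⟨hlo _, hhi _⟩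
  have hlo0 : 0 ≤ Qstar lo := by
    have := hQstar lo
    nlinarith [(hr lo).1, (hmean lo).1]
  have hhiR : Qstar hi ≤ 1 / (1 - γ) := by
    rw [le_div_iff₀ (by linarith)]
    have := hQstar hi
    nlinarith [(hr hi).2, (hmean hi).2]
  exact ⟨hlo0.trans (hlo sa), (hhi sa).trans hhiR⟩

end Bellman

section Noise

noncomputable def discountedNoise (η : ℝ) (ξ : ℕ → ℝ) (b i : ℕ) : ℝ :=
  ∑ j ∈ Ioc b i, η * (1 - η) ^ (i - j) * ξ j

variable {η : ℝ} {ξ : ℕ → ℝ} {b i : ℕ}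

@[simp]
lemma discountedNoise_self : discountedNoise η ξ b b = 0 := by
  simp [discountedNoise]

lemma discountedNoise_succ (h : b ≤ i) :
    discountedNoise η ξ b (i + 1) = (1 - η) * discountedNoise η ξ b i + η * ξ (i + 1) := by
  rw [discountedNoise, sum_Ioc_succ_top (by omega), discountedNoise, mul_sum, Nat.sub_self]
  congr 1
  · refine sum_congr rfl fun j hj => ?_
    rw [Nat.sub_add_comm (mem_Ioc.1 hj).2, pow_succ]
    ring
  · ring

end Noise

section LocalError

variable {S A : Type*} [Fintype S] [Fintype A] [Nonempty A]
  {P : S × A → S → ℝ} {r : S × A → ℝ} {γ η lam u : ℝ} {Qstar : S × A → ℝ}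
  {q : ℕ → S × A → ℝ} {next : ℕ → S × A → S} {b m : ℕ}

lemma abs_sub_add_discountedNoise_le
    (hQstar : ∀ sa, Qstar sa = r sa + γ * ∑ s', P sa s' * stateValue Qstar s')
    (hγ0 : 0 ≤ γ) (hγ1 : γ ≤ 1) (hη0 : 0 ≤ η) (hη1 : η ≤ 1)
    (hq : ∀ n < m, ∀ sa, q (b + n + 1) sa = (1 - η) * q (b + n) sa
      + η * (r sa + γ * stateValue (q (b + n)) (next (b + n + 1) sa)))
    (hnoise : ∀ n ≤ m, ∀ sa, |discountedNoise η (fun j => stateValue Qstar (next j sa)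
      - ∑ s', P sa s' * stateValue Qstar s') b (b + n)| ≤ lam)
    (hu : ∀ sa, |Qstar sa - q b sa| ≤ u) :
    ∀ n ≤ m, ∀ sa, |Qstar sa - q (b + n) sa + γ * discountedNoise η (fun j =>
      stateValue Qstar (next j sa) - ∑ s', P sa s' * stateValue Qstar s') b (b + n)|
        ≤ u + n * η * lam := by
  set N := fun t sa => discountedNoise η (fun j => stateValue Qstar (next j sa)
      - ∑ s', P sa s' * stateValue Qstar s') b t
  intro n
  induction n with
  | zero => simpa [N] using hu
  | succ n ih =>
    intro hn sa
    set E := u + n * η * lam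
    have hlam : 0 ≤ lam := (abs_nonneg _).trans (hnoise 0 (Nat.zero_le _) sa)
    have hE : ∀ sa', |Qstar sa' - q (b + n) sa'| ≤ E + γ * lam := fun sa' => by
      have := ih (by omega) sa'
      have := hnoise n (by omega) sa'
      calc |Qstar sa' - q (b + n) sa'|
          ≤ |Qstar sa' - q (b + n) sa' + γ * N (b + n) sa'| + |γ * N (b + n) sa'| := by
            simpa using
              abs_sub (Qstar sa' - q (b + n) sa' + γ * N (b + n) sa') (γ * N (b + n) sa')
        _ ≤ E + γ * lam := by rw [abs_mul, abs_of_nonneg hγ0]; gcongr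
    have hE0 : 0 ≤ E := (abs_nonneg _).trans (ih (by omega) sa)
    set s' := next (b + n + 1) sa
    have hV : |stateValue Qstar s' - stateValue (q (b + n)) s'| ≤ E + γ * lam :=
      abs_vmax_sub_vmax_le fun a => hE (s', a)
    have hrec : Qstar sa - q (b + (n + 1)) sa + γ * N (b + (n + 1)) sa
        = (1 - η) * (Qstar sa - q (b + n) sa + γ * N (b + n) sa)
          + η * γ * (stateValue Qstar s' - stateValue (q (b + n)) s') := by
      simp only [N, ← add_assoc, discountedNoise_succ (Nat.le_add_right b n), hq n hn sa]
      linear_combination η * hQstar sa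
    rw [hrec]
    calc _ ≤ (1 - η) * E + η * γ * (E + γ * lam) := by
          refine (abs_add_le _ _).trans ?_
          rw [abs_mul, abs_mul, abs_of_nonneg (by linarith), abs_of_nonneg (mul_nonneg hη0 hγ0)]
          exact add_le_add (mul_le_mul_of_nonneg_left (ih (by omega) sa) (by linarith))
            (mul_le_mul_of_nonneg_left hV (mul_nonneg hη0 hγ0))
      _ ≤ u + (n + 1 : ℕ) * η * lam := by
          push_cast
          nlinarith [mul_le_mul_of_nonneg_left hγ1 (mul_nonneg hη0 hE0),
            mul_le_mul_of_nonneg_left (mul_le_one₀ hγ1 hγ0 hγ1) (mul_nonneg hη0 hlam)]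

end LocalError

namespace ProbabilityTheory.HasSubgaussianMGF

variable {Ω : Type*} [MeasurableSpace Ω] {μ : Measure Ω} {X : Ω → ℝ} {c : NNReal}

lemma mono (h : HasSubgaussianMGF X c μ) {c' : NNReal} (hc : c ≤ c') :
    HasSubgaussianMGF X c' μ :=
  ⟨h.integrable_exp_mul, fun t => (h.mgf_le t).trans (by gcongr)⟩

lemma measureReal_le_abs_le [IsFiniteMeasure μ] (h : HasSubgaussianMGF X c μ) {ε : ℝ}
    (hε : 0 ≤ ε) : μ.real {ω | ε ≤ |X ω|} ≤ 2 * exp (-ε ^ 2 / (2 * c)) := by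
  calc μ.real {ω | ε ≤ |X ω|} ≤ μ.real ({ω | ε ≤ X ω} ∪ {ω | ε ≤ (-X) ω}) :=
        measureReal_mono fun ω (hω : ε ≤ |X ω|) =>
          show ε ≤ X ω ∨ ε ≤ -X ω from le_abs.1 hω
    _ ≤ μ.real {ω | ε ≤ X ω} + μ.real {ω | ε ≤ (-X) ω} := measureReal_union_le _ _
    _ ≤ 2 * exp (-ε ^ 2 / (2 * c)) := by
        linarith [h.measure_ge_le hε, h.neg.measure_ge_le hε]

end ProbabilityTheory.HasSubgaussianMGF

section Sampling

variable {Ω S : Type*} [MeasurableSpace Ω] {Pr : Measure Ω} [IsProbabilityMeasure Pr]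
  [Fintype S] [MeasurableSpace S] [MeasurableSingletonClass S]

lemma integral_comp_eq_sum_of_law {Y : Ω → S} (hY : Measurable Y) {p : S → ℝ}
    (hp : ∀ x, 0 ≤ p x) (hlaw : ∀ x, Pr {ω | Y ω = x} = ENNReal.ofReal (p x)) (f : S → ℝ) :
    ∫ ω, f (Y ω) ∂Pr = ∑ x, p x * f x := by
  rw [← integral_map hY.aemeasurable (measurable_of_countable f).aestronglyMeasurable,
    integral_fintype Integrable.of_finite]
  refine sum_congr rfl fun x _ => ?_
  simp only [map_measureReal_apply hY (measurableSet_singleton x), measureReal_def,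
    Set.preimage, Set.mem_singleton_iff, hlaw, ENNReal.toReal_ofReal (hp x), smul_eq_mul]

lemma hasSubgaussianMGF_sum_mul_sub_of_law {Y : ℕ → Ω → S} (hY : ∀ j, Measurable (Y j))
    (hindep : iIndepFun Y Pr) {p : S → ℝ} (hp : ∀ x, 0 ≤ p x)
    (hlaw : ∀ j x, Pr {ω | Y j ω = x} = ENNReal.ofReal (p x))
    {f : S → ℝ} {a b : ℝ} (hf : ∀ x, f x ∈ Set.Icc a b) (w : ℕ → ℝ) (s : Finset ℕ) :
    HasSubgaussianMGF (fun ω => ∑ j ∈ s, w j * (f (Y j ω) - ∑ x, p x * f x))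
      (∑ j ∈ s, ‖w j‖₊ ^ 2 * (‖b - a‖₊ / 2) ^ 2) Pr := by
  have hf_meas : Measurable f := measurable_of_countable f
  refine HasSubgaussianMGF.sum_of_iIndepFun
    (hindep.comp (fun j x => w j * (f x - ∑ x, p x * f x))
      fun j => (hf_meas.sub_const _).const_mul _) fun j _ => ?_
  have := (hasSubgaussianMGF_of_mem_Icc (μ := Pr) (X := fun ω => f (Y j ω))
    (hf_meas.comp (hY j)).aemeasurable (ae_of_all _ fun ω => hf (Y j ω))).const_mul (w j)
  have hsq : ‖w j‖₊ ^ 2 = ⟨w j ^ 2, sq_nonneg _⟩ := NNReal.eq (by simp; rfl)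
  rwa [hsq, ← integral_comp_eq_sum_of_law (hY j) hp (hlaw j)]

lemma measureReal_le_abs_discountedNoise_le {Y : ℕ → Ω → S} (hY : ∀ j, Measurable (Y j))
    (hindep : iIndepFun Y Pr) {p : S → ℝ} (hp : ∀ x, 0 ≤ p x)
    (hlaw : ∀ j x, Pr {ω | Y j ω = x} = ENNReal.ofReal (p x))
    {f : S → ℝ} {a b : ℝ} (hf : ∀ x, f x ∈ Set.Icc a b) {η : ℝ} (hη0 : 0 ≤ η) (hη1 : η ≤ 1)
    {t₀ t n : ℕ} (hn : t - t₀ ≤ n) {ε : ℝ} (hε : 0 ≤ ε) :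
    Pr.real {ω | ε ≤ |discountedNoise η (fun j => f (Y j ω) - ∑ x, p x * f x) t₀ t|}
      ≤ 2 * exp (-ε ^ 2 / (2 * (n * (η * (b - a) / 2) ^ 2))) := by
  have hw : ∀ j, (η * (1 - η) ^ (t - j)) ^ 2 ≤ η ^ 2 := fun j =>
    pow_le_pow_left₀ (by have := pow_nonneg (sub_nonneg.2 hη1) (t - j); positivity)
      (mul_le_of_le_one_right hη0 (pow_le_one₀ (by linarith) (by linarith))) 2
  have hc : 0 ≤ n * (η * (b - a) / 2) ^ 2 := by positivity
  have htail := ((hasSubgaussianMGF_sum_mul_sub_of_law hY hindep hp hlaw hf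
    (fun j => η * (1 - η) ^ (t - j)) (Ioc t₀ t)).mono
    (c' := (n * (η * (b - a) / 2) ^ 2).toNNReal) ?_).measureReal_le_abs_le hε
  · rwa [Real.coe_toNNReal _ hc] at htail
  rw [← NNReal.coe_le_coe, Real.coe_toNNReal _ hc]
  push_cast
  calc ∑ j ∈ Ioc t₀ t, ‖η * (1 - η) ^ (t - j)‖ ^ 2 * (‖b - a‖ / 2) ^ 2
      ≤ ∑ j ∈ Ioc t₀ t, (η * (b - a) / 2) ^ 2 := sum_le_sum fun j _ => by
        rw [Real.norm_eq_abs, Real.norm_eq_abs, sq_abs, div_pow, sq_abs]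
        nlinarith [mul_le_mul_of_nonneg_right (hw j) (sq_nonneg (b - a))]
    _ ≤ n * (η * (b - a) / 2) ^ 2 := by
        rw [sum_const, Nat.card_Ioc, nsmul_eq_mul]
        gcongr

end Sampling

lemma ofReal_one_sub_card_mul_le_measure {Ω ι : Type*} [MeasurableSpace Ω] {Pr : Measure Ω}
    [IsProbabilityMeasure Pr] (s : Finset ι) (E : ι → Set Ω) {ε : ℝ}
    (hE : ∀ x ∈ s, Pr.real (E x) ≤ ε) :
    ENNReal.ofReal (1 - #s * ε) ≤ Pr {ω | ∀ x ∈ s, ω ∉ E x} := by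
  set G := {ω | ∀ x ∈ s, ω ∉ E x}
  have hGc : Pr.real Gᶜ ≤ #s * ε := calc
    Pr.real Gᶜ ≤ Pr.real (⋃ x ∈ s, E x) :=
      measureReal_mono (fun ω hω => by simpa [G] using hω) (measure_ne_top _ _)
    _ ≤ ∑ x ∈ s, Pr.real (E x) := measureReal_biUnion_finset_le s E
    _ ≤ #s * ε := by simpa using sum_le_card_nsmul s _ ε hE
  have hcover : 1 ≤ Pr.real G + Pr.real Gᶜ := by
    simpa using measureReal_union_le (μ := Pr) G Gᶜ
  rw [← ofReal_measureReal]
  exact ENNReal.ofReal_le_ofReal (by linarith)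

lemma mul_two_mul_exp_neg_four_mul_log_div_le {N δ : ℝ} (hN : 2 ≤ N) (hδ0 : 0 < δ)
    (hδ1 : δ < 1) : N * (2 * exp (-(4 * log (N / δ)))) ≤ δ := by
  have hpos : 0 < N / δ := by positivity
  rw [show -(4 * log (N / δ)) = -log ((N / δ) ^ 4) by rw [log_pow]; norm_num, exp_neg,
    exp_log (by positivity), div_pow, inv_div,
    show N * (2 * (δ ^ 4 / N ^ 4)) = δ * (2 * δ ^ 3 / N ^ 3) by field_simp]
  refine mul_le_of_le_one_right hδ0.le ((div_le_one (by positivity)).2 ?_)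
  have : δ ^ 3 ≤ 1 := pow_le_one₀ hδ0.le hδ1.le
  nlinarith [pow_le_pow_left₀ (by norm_num) hN 3]

section FedSynQ

variable {S A Ω : Type*} {K τ : ℕ} {η γ : ℝ} {r : S × A → ℝ}
  {Q Qhalf : ℕ → Fin K → S × A → Ω → ℝ} {samp : ℕ → Fin K → S × A → Ω → S}

lemma mul_div_eq_mul_div_of_le_of_le (hτ : 0 < τ) {i t : ℕ} (hbt : τ * (i / τ) ≤ t)
    (hti : t ≤ i) : τ * (t / τ) = τ * (i / τ) :=
  congrArg (τ * ·) <| le_antisymm (Nat.div_le_div_right hti)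
    ((Nat.le_div_iff_mul_le hτ).2 (by rwa [mul_comm]))

lemma fedSynQ_average_eq_of_dvd (hK : 0 < K) {Q0 : S × A → ℝ}
    (hinit : ∀ k sa ω, Q 0 k sa ω = Q0 sa)
    (havg : ∀ t k sa ω, Q (t + 1) k sa ω
      = if τ ∣ (t + 1) then (K : ℝ)⁻¹ * ∑ k' : Fin K, Qhalf (t + 1) k' sa ω
        else Qhalf (t + 1) k sa ω)
    {t : ℕ} (ht : τ ∣ t) (k : Fin K) (sa : S × A) (ω : Ω) :
    (K : ℝ)⁻¹ * ∑ k' : Fin K, Q t k' sa ω = Q t k sa ω := by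
  have hsame : ∀ k', Q t k' sa ω = Q t k sa ω := by
    intro k'
    cases t with
    | zero => rw [hinit, hinit]
    | succ n => rw [havg, havg, if_pos ht, if_pos ht]
  rw [sum_congr rfl fun k' _ => hsame k', sum_const, card_univ, Fintype.card_fin, nsmul_eq_mul,
    inv_mul_cancel_left₀ (by positivity)]

lemma fedSynQ_eq_localUpdate [Fintype A] (hτ : 0 < τ)
    (hupd : ∀ t k sa ω, Qhalf (t + 1) k sa ω
      = (1 - η) * Q t k sa ω
        + η * (r sa + γ * vmax fun a' => Q t k (samp (t + 1) k sa ω, a') ω))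
    (havg : ∀ t k sa ω, Q (t + 1) k sa ω
      = if τ ∣ (t + 1) then (K : ℝ)⁻¹ * ∑ k' : Fin K, Qhalf (t + 1) k' sa ω
        else Qhalf (t + 1) k sa ω)
    {i n : ℕ} (hn : τ * (i / τ) + n < i) (k : Fin K) (sa : S × A) (ω : Ω) :
    Q (τ * (i / τ) + n + 1) k sa ω = (1 - η) * Q (τ * (i / τ) + n) k sa ω
      + η * (r sa + γ * stateValue (fun sa => Q (τ * (i / τ) + n) k sa ω)
        (samp (τ * (i / τ) + n + 1) k sa ω)) := by
  have hndvd : ¬ τ ∣ τ * (i / τ) + n + 1 := by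
    rw [add_assoc, Nat.dvd_add_right (dvd_mul_right τ _)]
    have := Nat.div_add_mod i τ
    have := Nat.mod_lt i hτ
    exact Nat.not_dvd_of_pos_of_lt (by omega) (by omega)
  rw [havg, if_neg hndvd, hupd]
  rfl

lemma fedSynQ_supNorm_sub_le [Fintype S] [Fintype A] [Nonempty S] [Nonempty A]
    {P : S × A → S → ℝ} {Qstar : S × A → ℝ}
    (hQstar : ∀ sa, Qstar sa = r sa + γ * ∑ s', P sa s' * stateValue Qstar s')
    (hγ0 : 0 ≤ γ) (hγ1 : γ ≤ 1) (hη0 : 0 ≤ η) (hη1 : η ≤ 1) (hτ : 0 < τ)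
    (hτη : (τ : ℝ) * η ≤ 1 / 2) (hK : 0 < K) {Q0 : S × A → ℝ}
    (hinit : ∀ k sa ω, Q 0 k sa ω = Q0 sa)
    (hupd : ∀ t k sa ω, Qhalf (t + 1) k sa ω
      = (1 - η) * Q t k sa ω
        + η * (r sa + γ * vmax fun a' => Q t k (samp (t + 1) k sa ω, a') ω))
    (havg : ∀ t k sa ω, Q (t + 1) k sa ω
      = if τ ∣ (t + 1) then (K : ℝ)⁻¹ * ∑ k' : Fin K, Qhalf (t + 1) k' sa ω
        else Qhalf (t + 1) k sa ω)
    {lam : ℝ} (hlam : 0 ≤ lam) {i : ℕ} (k : Fin K) (ω : Ω)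
    (hnoise : ∀ t, τ * (i / τ) < t → t ≤ i → ∀ sa, |discountedNoise η (fun j =>
      stateValue Qstar (samp j k sa ω) - ∑ s', P sa s' * stateValue Qstar s') (τ * (t / τ)) t|
        ≤ lam) :
    supNorm (fun sa => Qstar sa - Q i k sa ω)
      ≤ supNorm (fun sa => Qstar sa - (K : ℝ)⁻¹ * ∑ k' : Fin K, Q (τ * (i / τ)) k' sa ω)
        + 2 * lam := by
  set b := τ * (i / τ)
  set u := supNorm (fun sa => Qstar sa - (K : ℝ)⁻¹ * ∑ k' : Fin K, Q b k' sa ω)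
  have hbi : b ≤ i := Nat.mul_div_le i τ
  have hib : i - b < τ := by
    have := Nat.div_add_mod i τ
    have := Nat.mod_lt i hτ
    omega
  have hnoise' : ∀ n ≤ i - b, ∀ sa, |discountedNoise η (fun j =>
      stateValue Qstar (samp j k sa ω) - ∑ s', P sa s' * stateValue Qstar s') b (b + n)|
        ≤ lam := by
    intro n hn sa
    rcases n.eq_zero_or_pos with rfl | hn0
    · simpa using hlam
    · have h := hnoise (b + n) (by omega) (by omega) sa
      rwa [mul_div_eq_mul_div_of_le_of_le hτ (Nat.le_add_right b n) (by omega : b + n ≤ i)] at h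
  have herr := abs_sub_add_discountedNoise_le hQstar hγ0 hγ1 hη0 hη1
    (q := fun t sa => Q t k sa ω) (next := fun j sa => samp j k sa ω)
    (fun n hn sa => fedSynQ_eq_localUpdate hτ hupd havg (by omega) k sa ω) hnoise'
    (fun sa => by
      rw [← fedSynQ_average_eq_of_dvd hK hinit havg (dvd_mul_right τ _) k sa ω]
      exact abs_le_supNorm (fun sa => Qstar sa - (K : ℝ)⁻¹ * ∑ k' : Fin K, Q b k' sa ω) sa)
    (i - b) le_rfl
  have hdrift : ((i - b : ℕ) : ℝ) * η ≤ 1 / 2 := le_trans (by gcongr) hτη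
  refine supNorm_le fun sa => ?_
  have he := herr sa
  have hN := hnoise' (i - b) le_rfl sa
  rw [Nat.add_sub_cancel' hbi] at he hN
  set N := discountedNoise η (fun j =>
      stateValue Qstar (samp j k sa ω) - ∑ s', P sa s' * stateValue Qstar s') b i
  calc |Qstar sa - Q i k sa ω| ≤ |Qstar sa - Q i k sa ω + γ * N| + |γ * N| := by
        simpa using abs_sub (Qstar sa - Q i k sa ω + γ * N) (γ * N)
    _ ≤ u + 2 * lam := by
        rw [abs_mul, abs_of_nonneg hγ0]
        nlinarith [mul_le_mul_of_nonneg_right hdrift hlam,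
          mul_le_mul hγ1 hN (abs_nonneg _) zero_le_one]

lemma fedSynQ_noise_tail_le [Fintype S] [MeasurableSpace S] [MeasurableSingletonClass S]
    [MeasurableSpace Ω] {Pr : Measure Ω} [IsProbabilityMeasure Pr] {P : S × A → S → ℝ}
    (hP0 : ∀ sa s', 0 ≤ P sa s') (hmeas : ∀ t k sa, Measurable (samp t k sa))
    (hlaw : ∀ t k sa s', Pr {ω | samp t k sa ω = s'} = ENNReal.ofReal (P sa s'))
    (hindep : iIndepFun (m := fun _ => inferInstance)
      (fun (p : ℕ × Fin K × (S × A)) ω => samp p.1 p.2.1 p.2.2 ω) Pr)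
    {V : S → ℝ} {R : ℝ} (hR : 0 < R) (hV : ∀ s, V s ∈ Set.Icc 0 R) (hτ : 0 < τ) (hη0 : 0 < η)
    (hη1 : η ≤ 1) (hτη : (τ : ℝ) * η ≤ 1 / 2) {L : ℝ} (hL : 0 ≤ L) {t₀ t : ℕ} (ht : t - t₀ ≤ τ)
    (k : Fin K) (sa : S × A) :
    Pr.real {ω | R * Real.sqrt (η * L)
        ≤ |discountedNoise η (fun j => V (samp j k sa ω) - ∑ s', P sa s' * V s') t₀ t|}
      ≤ 2 * exp (-(4 * L)) := by
  refine (measureReal_le_abs_discountedNoise_le (fun j => hmeas j k sa)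
    (hindep.precomp (g := fun j => (j, k, sa)) fun _ _ h => (Prod.mk.inj h).1) (hP0 sa)
    (fun j => hlaw j k sa) hV hη0.le hη1 ht (by positivity)).trans ?_
  gcongr
  rw [neg_div, neg_le_neg_iff, le_div_iff₀ (by positivity), mul_pow, sq_sqrt (by positivity)]
  nlinarith [mul_le_mul_of_nonneg_right hτη (by positivity : 0 ≤ η * L * R ^ 2)]

lemma ofReal_one_sub_le_measure_abs_discountedNoise_lt [Fintype S] [Fintype A] [Nonempty S]
    [Nonempty A] [MeasurableSpace S] [MeasurableSingletonClass S] [MeasurableSpace Ω]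
    {Pr : Measure Ω} [IsProbabilityMeasure Pr] {P : S × A → S → ℝ}
    (hP0 : ∀ sa s', 0 ≤ P sa s') (hmeas : ∀ t k sa, Measurable (samp t k sa))
    (hlaw : ∀ t k sa s', Pr {ω | samp t k sa ω = s'} = ENNReal.ofReal (P sa s'))
    (hindep : iIndepFun (m := fun _ => inferInstance)
      (fun (p : ℕ × Fin K × (S × A)) ω => samp p.1 p.2.1 p.2.2 ω) Pr)
    {V : S → ℝ} {R : ℝ} (hR : 0 < R) (hV : ∀ s, V s ∈ Set.Icc 0 R) (hK : 0 < K) {T : ℕ}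
    (hT : 2 ≤ T) (hτ : 0 < τ) (hη0 : 0 < η) (hη1 : η ≤ 1) (hτη : (τ : ℝ) * η ≤ 1 / 2) {δ : ℝ}
    (hδ0 : 0 < δ) (hδ1 : δ < 1) :
    ENNReal.ofReal (1 - δ) ≤ Pr {ω | ∀ t ∈ Icc 1 T, ∀ k sa,
      |discountedNoise η (fun j => V (samp j k sa ω) - ∑ s', P sa s' * V s') (τ * (t / τ)) t|
        < R * Real.sqrt (η * Real.log ((Fintype.card S) * (Fintype.card A) * K * T / δ))} := by
  set N : ℝ := (Fintype.card S) * (Fintype.card A) * K * T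
  have hN : 2 ≤ N := calc
    (2 : ℝ) = 1 * 1 * 1 * 2 := by norm_num
    _ ≤ (Fintype.card S) * (Fintype.card A) * K * T := by
      gcongr ?_ * ?_ * ?_ * ?_ <;> norm_cast <;> exact Fintype.card_pos
  set idx := Icc 1 T ×ˢ (univ : Finset (Fin K × (S × A)))
  have hcard : (#idx : ℝ) = N := by simp [idx, N, card_product, mul_comm, mul_left_comm]
  have hsmall := ofReal_one_sub_card_mul_le_measure (Pr := Pr) idx
    (fun x => {ω | R * Real.sqrt (η * Real.log (N / δ)) ≤ |discountedNoise η
      (fun j => V (samp j x.2.1 x.2.2 ω) - ∑ s', P x.2.2 s' * V s') (τ * (x.1 / τ)) x.1|})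
    fun x _ => fedSynQ_noise_tail_le hP0 hmeas hlaw hindep hR hV hτ hη0 hη1 hτη
      (Real.log_nonneg ((one_le_div hδ0).2 (by linarith)))
      (by have := Nat.div_add_mod x.1 τ; have := Nat.mod_lt x.1 hτ; omega) x.2.1 x.2.2
  rw [hcard] at hsmall
  refine le_trans (ENNReal.ofReal_le_ofReal ?_) (hsmall.trans (measure_mono fun ω hω t ht k sa =>
    not_le.1 (hω (t, k, sa) (mem_product.2 ⟨ht, mem_univ _⟩))))
  linarith [mul_two_mul_exp_neg_four_mul_log_div_le hN hδ0 hδ1]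

end FedSynQ

theorem fedSynQ_local_error_bound_general
    {S A : Type*} [Fintype S] [Fintype A] [Nonempty S] [Nonempty A]
    [MeasurableSpace S] [MeasurableSingletonClass S]
    {Ω : Type*} [MeasurableSpace Ω] (Pr : Measure Ω) [IsProbabilityMeasure Pr]
    -- the MDP
    (P : S × A → S → ℝ) (r : S × A → ℝ) (γ : ℝ)
    (hP0 : ∀ sa s', 0 ≤ P sa s') (hP1 : ∀ sa, ∑ s', P sa s' = 1)
    (hr : ∀ sa, r sa ∈ Set.Icc (0 : ℝ) 1) (hγ : γ ∈ Set.Ico (0 : ℝ) 1)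
    -- the optimal Q-function (Bellman fixed point)
    (Qstar : S × A → ℝ)
    (hQstar : ∀ sa, Qstar sa
        = r sa + γ * ∑ s', P sa s' * vmax fun a' => Qstar (s', a'))
    -- algorithm parameters
    (K T τ : ℕ) (hK : 0 < K) (hT : 0 < T) (hτ : 0 < τ) (hτT : τ ∣ T)
    (η : ℝ) (hη0 : 0 < η) (hη1 : η < 1)
    (δ : ℝ) (hδ : δ ∈ Set.Ioo (0 : ℝ) 1)
    -- synchronous samples from the generative model
    (samp : ℕ → Fin K → S × A → Ω → S)
    (hmeas : ∀ t k sa, Measurable (samp t k sa))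
    (hlaw : ∀ t k sa s', Pr {ω | samp t k sa ω = s'} = ENNReal.ofReal (P sa s'))
    (hindep : iIndepFun (m := fun _ => inferInstance)
      (fun (p : ℕ × Fin K × (S × A)) ω => samp p.1 p.2.1 p.2.2 ω) Pr)
    -- the iterates of FedSynQ
    (Q0 : S × A → ℝ)
    (Q Qhalf : ℕ → Fin K → S × A → Ω → ℝ)
    (hinit : ∀ k sa ω, Q 0 k sa ω = Q0 sa)
    (hupd : ∀ t k sa ω, Qhalf (t + 1) k sa ω
        = (1 - η) * Q t k sa ω
          + η * (r sa + γ * vmax fun a' => Q t k (samp (t + 1) k sa ω, a') ω))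
    (havg : ∀ t k sa ω, Q (t + 1) k sa ω
        = if τ ∣ (t + 1) then (K : ℝ)⁻¹ * ∑ k' : Fin K, Qhalf (t + 1) k' sa ω
          else Qhalf (t + 1) k sa ω)
    -- the learning rate condition `τη ≤ 1/2`
    (hτη : (τ : ℝ) * η ≤ 1 / 2) :
    Pr {ω | ∀ i, 1 ≤ i → i ≤ T → ∀ k : Fin K,
          supNorm (fun sa : S × A => Qstar sa - Q i k sa ω)
            ≤ supNorm (fun sa : S × A =>
                  Qstar sa - (K : ℝ)⁻¹ * ∑ k' : Fin K, Q (τ * (i / τ)) k' sa ω)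
              + 2 / (1 - γ)
                * Real.sqrt (η
                    * Real.log ((Fintype.card S) * (Fintype.card A) * K * T / δ))}
      ≥ ENNReal.ofReal (1 - δ) := by
  obtain ⟨hγ0, hγ1⟩ := hγ
  obtain ⟨hδ0, hδ1⟩ := hδ
  have hR : 0 < 1 / (1 - γ) := one_div_pos.2 (by linarith)
  -- For `τ = 1` every step synchronizes and the bound is deterministic; for `τ ≥ 2` we get
  -- `2 ≤ T`, which the union bound needs.
  rcases eq_or_ne τ 1 with rfl | hτ1
  · refine le_trans (ENNReal.ofReal_le_one.2 (by linarith))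
      (measure_univ.symm.trans_le (measure_mono fun ω _ i _ _ k => ?_))
    simp_rw [Nat.div_one, one_mul, fedSynQ_average_eq_of_dvd hK hinit havg (one_dvd i) k]
    exact le_add_of_nonneg_right (by positivity)
  have hQ := bellman_fixedPoint_mem_Icc hP0 hP1 hr ⟨hγ0, hγ1⟩ hQstar
  refine (ofReal_one_sub_le_measure_abs_discountedNoise_lt hP0 hmeas hlaw hindep hR
    (fun s => vmax_mem_Icc fun a => hQ (s, a)) hK ((by omega : 2 ≤ τ).trans (Nat.le_of_dvd hT hτT))
    hτ hη0 hη1.le hτη hδ0 hδ1).trans (measure_mono fun ω hω i hi1 hiT k => ?_)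
  rw [show 2 / (1 - γ) = 2 * (1 / (1 - γ)) by ring, mul_assoc]
  exact fedSynQ_supNorm_sub_le hQstar hγ0 hγ1.le hη0.le hη1.le hτ hτη hK hinit hupd havg
    (by positivity) k ω fun t hbt hti sa => (hω t (mem_Icc.2 ⟨by omega, by omega⟩) k sa).le

/-- local error bound between synchronizations (synchronous setting).
If `τη ≤ 1/2`, then with probability at least `1-δ`, simultaneously for all
`1 ≤ i ≤ T` and all agents `k`,
`‖Δ_i^k‖_∞ ≤ ‖Δ_{ι(i)}‖_∞ + (2/(1-γ)) √(η log(|S||A|KT/δ))`, where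
`Δ_i^k = Q* − Q_i^k`, `Δ_{ι(i)} = Q* − (1/K)Σ_k Q_{ι(i)}^k`, and `ι(i) = τ⌊i/τ⌋`. -/
theorem fedSynQ_local_error_bound
    {S A : Type*} [Fintype S] [Fintype A] [Nonempty S] [Nonempty A]
    [MeasurableSpace S] [MeasurableSingletonClass S]
    {Ω : Type*} [MeasurableSpace Ω] (Pr : Measure Ω) [IsProbabilityMeasure Pr]
    -- the MDP
    (P : S × A → S → ℝ) (r : S × A → ℝ) (γ : ℝ)
    (hP0 : ∀ sa s', 0 ≤ P sa s') (hP1 : ∀ sa, ∑ s', P sa s' = 1)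
    (hr : ∀ sa, r sa ∈ Set.Icc (0 : ℝ) 1) (hγ : γ ∈ Set.Ico (0 : ℝ) 1)
    -- the optimal Q-function (Bellman fixed point)
    (Qstar : S × A → ℝ)
    (hQstar : ∀ sa, Qstar sa
        = r sa + γ * ∑ s', P sa s' * vmax fun a' => Qstar (s', a'))
    -- algorithm parameters
    (K T τ : ℕ) (hK : 0 < K) (hT : 0 < T) (hτ : 0 < τ) (hτT : τ ∣ T)
    (η : ℝ) (hη0 : 0 < η) (hη1 : η < 1)
    (δ : ℝ) (hδ : δ ∈ Set.Ioo (0 : ℝ) 1)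
    -- synchronous samples from the generative model
    (samp : ℕ → Fin K → S × A → Ω → S)
    (hmeas : ∀ t k sa, Measurable (samp t k sa))
    (hlaw : ∀ t k sa s', Pr {ω | samp t k sa ω = s'} = ENNReal.ofReal (P sa s'))
    (hindep : iIndepFun (m := fun _ => inferInstance)
      (fun (p : ℕ × Fin K × (S × A)) ω => samp p.1 p.2.1 p.2.2 ω) Pr)
    -- the iterates of FedSynQ
    (Q0 : S × A → ℝ) (hQ0 : ∀ sa, Q0 sa ∈ Set.Icc (0 : ℝ) (1 / (1 - γ)))
    (Q Qhalf : ℕ → Fin K → S × A → Ω → ℝ)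
    (hinit : ∀ k sa ω, Q 0 k sa ω = Q0 sa)
    (hupd : ∀ t k sa ω, Qhalf (t + 1) k sa ω
        = (1 - η) * Q t k sa ω
          + η * (r sa + γ * vmax fun a' => Q t k (samp (t + 1) k sa ω, a') ω))
    (havg : ∀ t k sa ω, Q (t + 1) k sa ω
        = if τ ∣ (t + 1) then (K : ℝ)⁻¹ * ∑ k' : Fin K, Qhalf (t + 1) k' sa ω
          else Qhalf (t + 1) k sa ω)
    -- the learning rate condition `τη ≤ 1/2`
    (hτη : (τ : ℝ) * η ≤ 1 / 2) :
    Pr {ω | ∀ i, 1 ≤ i → i ≤ T → ∀ k : Fin K,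
          supNorm (fun sa : S × A => Qstar sa - Q i k sa ω)
            ≤ supNorm (fun sa : S × A =>
                  Qstar sa - (K : ℝ)⁻¹ * ∑ k' : Fin K, Q (τ * (i / τ)) k' sa ω)
              + 2 / (1 - γ)
                * Real.sqrt (η
                    * Real.log ((Fintype.card S) * (Fintype.card A) * K * T / δ))}
      ≥ ENNReal.ofReal (1 - δ) :=
  fedSynQ_local_error_bound_general Pr P r γ hP0 hP1 hr hγ Qstar hQstar K T τ hK hT hτ hτT η hη0 hη1
    δ hδ samp hmeas hlaw hindep Q0 Q Qhalf hinit hupd havg hτη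
end

section
/- Properties of the equal-averaging aggregation weights: Consider integers v1, v2, t with 0 ≤ v1 ≤ v2 ≤ t ≤ T where τ divides t, a state-action pair (s,a) ∈ S×A, and any realization of the agents' trajectories. The quantities λ, ω_{0,t}, ω_{u,t}^k satisfy: (i) λ_{v1,v2}(s,a) ≤ (1-η)^{min_{k∈{1,…,K}} N_{v1,v2}^k(s,a)}; (ii) ω_{0,t}(s,a) + Σ_{k=1}^K Σ_{u∈𝒰_{0,t}^k(s,a)} ω_{u,t}^k(s,a) = 1; (iii) for every 0 ≤ h' ≤ φ(t), Σ_{k=1}^K Σ_{u∈𝒰_{0,h'τ}^k(s,a)} ω_{u,t}^k(s,a) ≤ (1-η)^{Σ_{h=h'}^{φ(t)-1} min_{k∈{1,…,K}} N_{hτ,(h+1)τ}^k(s,a)}; (iv) Σ_{k=1}^K Σ_{u∈𝒰_{0,t}^k(s,a)} (ω_{u,t}^k(s,a))^2 ≤ 2η/K. -/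
/-!
Within one synchronization block, the weights of the visits of a single agent telescope:
`η Σ_u (1-η)^{N_{u+1,end}} = 1 - (1-η)^N`. Averaging over the agents, the weights of block `h`
therefore sum to `(1 - λ_h) Π_{l>h} λ_l = Π_{l>h} λ_l - Π_{l≥h} λ_l`, and summing over the blocks
telescopes again: the weights of the first `h'` blocks sum to `Π_{l≥h'} λ_l - ω_{0,t}`. This gives (ii)
and (iii), the latter with (i) applied to each factor. For (iv), each weight lies in `[0, η/K]` and
all of them sum to at most `1`.
-/

/-- The set of iteration indices `u ∈ [v1, v2)` at which the trajectory `x` visits `sa`. -/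
def visits {X : Type*} [DecidableEq X] (x : ℕ → X) (v1 v2 : ℕ) (sa : X) : Finset ℕ :=
  (Finset.Ico v1 v2).filter fun u => x u = sa

/-- Number of visits of the trajectory `x` to `sa` during iterations in `[v1, v2)`. -/
def Nvis {X : Type*} [DecidableEq X] (x : ℕ → X) (v1 v2 : ℕ) (sa : X) : ℕ :=
  (visits x v1 v2 sa).card

/-- `λ_{v1,v2}(s,a) = (1/K) Σ_k (1-η)^{N_{v1,v2}^k(s,a)}`. -/
noncomputable def lamW {X : Type*} [DecidableEq X] {K : ℕ} (η : ℝ)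
    (traj : Fin K → ℕ → X) (v1 v2 : ℕ) (sa : X) : ℝ :=
  (K : ℝ)⁻¹ * ∑ k : Fin K, (1 - η) ^ Nvis (traj k) v1 v2 sa

/-- `ω_{0,t}(s,a) = Π_{h=0}^{φ(t)-1} λ_{hτ,(h+1)τ}(s,a)`, with `φ(t) = ⌊t/τ⌋`. -/
noncomputable def om0 {X : Type*} [DecidableEq X] {K : ℕ} (η : ℝ) (τ : ℕ)
    (traj : Fin K → ℕ → X) (t : ℕ) (sa : X) : ℝ :=
  ∏ h ∈ Finset.range (t / τ), lamW η traj (h * τ) ((h + 1) * τ) sa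

/-- `ω_{u,t}^k(s,a) = (η/K)(1-η)^{N_{u+1,(φ(u)+1)τ}^k(s,a)} Π_{l=φ(u)+1}^{φ(t)-1} λ_{lτ,(l+1)τ}(s,a)`. -/
noncomputable def omU {X : Type*} [DecidableEq X] {K : ℕ} (η : ℝ) (τ : ℕ)
    (traj : Fin K → ℕ → X) (k : Fin K) (u t : ℕ) (sa : X) : ℝ :=
  (η / K) * (1 - η) ^ Nvis (traj k) (u + 1) ((u / τ + 1) * τ) sa
    * ∏ l ∈ Finset.Ico (u / τ + 1) (t / τ), lamW η traj (l * τ) ((l + 1) * τ) sa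

open Finset

section Visits

variable {X : Type*} [DecidableEq X] (x : ℕ → X) (sa : X)

lemma left_notMem_visits (v1 v2 : ℕ) : v1 ∉ visits x (v1 + 1) v2 sa := by
  simp [visits]

lemma visits_of_lt {v1 v2 : ℕ} (h : v1 < v2) :
    visits x v1 v2 sa =
      if x v1 = sa then insert v1 (visits x (v1 + 1) v2 sa) else visits x (v1 + 1) v2 sa := by
  rw [visits, ← insert_Ico_add_one_left_eq_Ico h, filter_insert]
  rfl

lemma Nvis_of_lt {v1 v2 : ℕ} (h : v1 < v2) :
    Nvis x v1 v2 sa = Nvis x (v1 + 1) v2 sa + if x v1 = sa then 1 else 0 := by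
  rw [Nvis, visits_of_lt x sa h]
  split_ifs
  · exact card_insert_of_notMem (left_notMem_visits x sa v1 v2)
  · rfl

lemma sum_visits_consecutive {M : Type*} [AddCommMonoid M] (f : ℕ → M) {v1 v2 v3 : ℕ}
    (h12 : v1 ≤ v2) (h23 : v2 ≤ v3) :
    ∑ u ∈ visits x v1 v2 sa, f u + ∑ u ∈ visits x v2 v3 sa, f u
      = ∑ u ∈ visits x v1 v3 sa, f u := by
  simp only [visits, sum_filter]
  exact sum_Ico_consecutive _ h12 h23

theorem one_sub_mul_sum_pow_Nvis {R : Type*} [CommRing R] (q : R) {v1 v2 : ℕ} (h : v1 ≤ v2) :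
    (1 - q) * ∑ u ∈ visits x v1 v2 sa, q ^ Nvis x (u + 1) v2 sa = 1 - q ^ Nvis x v1 v2 sa := by
  induction h using Nat.decreasingInduction with
  | self => simp [visits, Nvis]
  | of_succ k hk ih =>
    rw [visits_of_lt x sa hk, Nvis_of_lt x sa hk]
    split_ifs
    · rw [sum_insert (left_notMem_visits x sa k v2), mul_add, ih, pow_succ]
      ring
    · simpa using ih

end Visits

noncomputable def blockProd {X : Type*} [DecidableEq X] {K : ℕ} (η : ℝ) (τ : ℕ)
    (traj : Fin K → ℕ → X) (a b : ℕ) (sa : X) : ℝ :=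
  ∏ l ∈ Ico a b, lamW η traj (l * τ) ((l + 1) * τ) sa

section Weights

variable {X : Type*} [DecidableEq X] {K : ℕ} {η : ℝ} {τ : ℕ} {traj : Fin K → ℕ → X} {sa : X}

lemma lamW_nonneg (hη : η ≤ 1) (v1 v2 : ℕ) : 0 ≤ lamW η traj v1 v2 sa :=
  mul_nonneg (by positivity) (sum_nonneg fun _ _ => pow_nonneg (by linarith) _)

lemma lamW_le_pow_inf [NeZero K] (hη0 : 0 ≤ η) (hη1 : η ≤ 1) (v1 v2 : ℕ) :
    lamW η traj v1 v2 sa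
      ≤ (1 - η) ^ (univ.inf' univ_nonempty fun k : Fin K => Nvis (traj k) v1 v2 sa) := by
  have hK : (0 : ℝ) < K := by exact_mod_cast Nat.pos_of_neZero K
  rw [lamW, inv_mul_le_iff₀ hK]
  have hle : ∀ k ∈ (univ : Finset (Fin K)), (1 - η) ^ Nvis (traj k) v1 v2 sa
      ≤ (1 - η) ^ (univ.inf' univ_nonempty fun k : Fin K => Nvis (traj k) v1 v2 sa) :=
    fun k _ => pow_le_pow_of_le_one (by linarith) (by linarith) (inf'_le _ (mem_univ k))
  simpa [mul_comm] using sum_le_card_nsmul univ _ _ hle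

lemma blockProd_nonneg (hη : η ≤ 1) (a b : ℕ) : 0 ≤ blockProd η τ traj a b sa :=
  prod_nonneg fun _ _ => lamW_nonneg hη _ _

lemma blockProd_le_pow_sum_inf [NeZero K] (hη0 : 0 ≤ η) (hη1 : η ≤ 1) (a b : ℕ) :
    blockProd η τ traj a b sa
      ≤ (1 - η) ^ (∑ h ∈ Ico a b,
          univ.inf' univ_nonempty fun k : Fin K => Nvis (traj k) (h * τ) ((h + 1) * τ) sa) := by
  rw [← prod_pow_eq_pow_sum]
  exact prod_le_prod (fun _ _ => lamW_nonneg hη1 _ _) fun _ _ => lamW_le_pow_inf hη0 hη1 _ _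

lemma blockProd_le_one [NeZero K] (hη0 : 0 ≤ η) (hη1 : η ≤ 1) (a b : ℕ) :
    blockProd η τ traj a b sa ≤ 1 :=
  (blockProd_le_pow_sum_inf hη0 hη1 a b).trans (pow_le_one₀ (by linarith) (by linarith))

lemma blockProd_self (a : ℕ) : blockProd η τ traj a a sa = 1 := by
  rw [blockProd, Ico_self, prod_empty]

lemma blockProd_of_lt {a b : ℕ} (h : a < b) :
    blockProd η τ traj a b sa
      = lamW η traj (a * τ) ((a + 1) * τ) sa * blockProd η τ traj (a + 1) b sa :=
  prod_eq_prod_Ico_succ_bot h _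

lemma sum_omU_block [NeZero K] {h t : ℕ} (ht : h < t / τ) :
    ∑ k : Fin K, ∑ u ∈ visits (traj k) (h * τ) ((h + 1) * τ) sa, omU η τ traj k u t sa
      = blockProd η τ traj (h + 1) (t / τ) sa - blockProd η τ traj h (t / τ) sa := by
  have hK : (K : ℝ) ≠ 0 := NeZero.ne _
  rw [blockProd_of_lt ht]
  set P := blockProd η τ traj (h + 1) (t / τ) sa
  have hagent (k : Fin K) :
      ∑ u ∈ visits (traj k) (h * τ) ((h + 1) * τ) sa, omU η τ traj k u t sa
        = (1 - (1 - η) ^ Nvis (traj k) (h * τ) ((h + 1) * τ) sa) / K * P := by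
    have hblock : ∀ u ∈ visits (traj k) (h * τ) ((h + 1) * τ) sa,
        omU η τ traj k u t sa = η / K * (1 - η) ^ Nvis (traj k) (u + 1) ((h + 1) * τ) sa * P := by
      intro u hu
      -- `u` lies in block `h`, so `φ(u) = h`
      simp only [visits, mem_filter, mem_Ico] at hu
      rw [omU, Nat.div_eq_of_lt_le hu.1.1 hu.1.2]
      rfl
    rw [sum_congr rfl hblock, ← sum_mul, ← mul_sum, ← one_sub_mul_sum_pow_Nvis _ _ (1 - η)
      (Nat.mul_le_mul_right τ h.le_succ)]
    ring
  rw [sum_congr rfl fun k _ => hagent k, ← sum_mul, ← sum_div, lamW, sum_sub_distrib, sum_const,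
    card_univ, Fintype.card_fin, nsmul_one]
  field_simp

lemma sum_omU_prefix [NeZero K] {h' t : ℕ} (hh' : h' ≤ t / τ) :
    ∑ k : Fin K, ∑ u ∈ visits (traj k) 0 (h' * τ) sa, omU η τ traj k u t sa
      = blockProd η τ traj h' (t / τ) sa - blockProd η τ traj 0 (t / τ) sa := by
  induction h' with
  | zero => simp [visits]
  | succ n ih =>
    simp_rw [← sum_visits_consecutive _ sa _ (Nat.zero_le (n * τ))
      (Nat.mul_le_mul_right τ n.le_succ)]
    rw [sum_add_distrib, ih (by omega), sum_omU_block hh']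
    ring

lemma om0_eq_blockProd (t : ℕ) : om0 η τ traj t sa = blockProd η τ traj 0 (t / τ) sa := by
  rw [om0, range_eq_Ico, blockProd]

lemma om0_add_sum_omU [NeZero K] {t : ℕ} (hτt : τ ∣ t) :
    om0 η τ traj t sa + ∑ k : Fin K, ∑ u ∈ visits (traj k) 0 t sa, omU η τ traj k u t sa = 1 := by
  have hsum := sum_omU_prefix (η := η) (traj := traj) (sa := sa) (le_refl (t / τ))
  rw [Nat.div_mul_cancel hτt] at hsum
  rw [hsum, om0_eq_blockProd, blockProd_self]
  ring

lemma omU_nonneg (hη0 : 0 ≤ η) (hη1 : η ≤ 1) (k : Fin K) (u t : ℕ) :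
    0 ≤ omU η τ traj k u t sa :=
  mul_nonneg (mul_nonneg (by positivity) (pow_nonneg (by linarith) _)) (blockProd_nonneg hη1 _ _)

lemma omU_le [NeZero K] (hη0 : 0 ≤ η) (hη1 : η ≤ 1) (k : Fin K) (u t : ℕ) :
    omU η τ traj k u t sa ≤ η / K := by
  have hq : (1 - η) ^ Nvis (traj k) (u + 1) ((u / τ + 1) * τ) sa ≤ 1 :=
    pow_le_one₀ (by linarith) (by linarith)
  calc omU η τ traj k u t sa ≤ η / K * 1 * 1 :=
        mul_le_mul (mul_le_mul_of_nonneg_left hq (by positivity)) (blockProd_le_one hη0 hη1 _ _)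
          (blockProd_nonneg hη1 _ _) (by positivity)
    _ = η / K := by ring

lemma sum_sq_omU_le [NeZero K] (hη0 : 0 ≤ η) (hη1 : η ≤ 1) {t : ℕ} (hτt : τ ∣ t) :
    ∑ k : Fin K, ∑ u ∈ visits (traj k) 0 t sa, (omU η τ traj k u t sa) ^ 2 ≤ η / K := by
  have hsum : ∑ k : Fin K, ∑ u ∈ visits (traj k) 0 t sa, omU η τ traj k u t sa ≤ 1 := by
    linarith [om0_add_sum_omU (η := η) (traj := traj) (sa := sa) hτt,
      om0_eq_blockProd (η := η) (τ := τ) (traj := traj) (sa := sa) t,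
      blockProd_nonneg (τ := τ) (traj := traj) (sa := sa) hη1 0 (t / τ)]
  calc ∑ k : Fin K, ∑ u ∈ visits (traj k) 0 t sa, (omU η τ traj k u t sa) ^ 2
      ≤ ∑ k : Fin K, ∑ u ∈ visits (traj k) 0 t sa, η / K * omU η τ traj k u t sa := by
        gcongr with k _ u
        rw [sq]
        exact mul_le_mul_of_nonneg_right (omU_le hη0 hη1 k u t) (omU_nonneg hη0 hη1 k u t)
    _ = η / K * ∑ k : Fin K, ∑ u ∈ visits (traj k) 0 t sa, omU η τ traj k u t sa := by
        simp only [mul_sum]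
    _ ≤ η / K := mul_le_of_le_one_right (by positivity) hsum

end Weights

theorem eq_avg_weight_properties_general
    {S A : Type*} [DecidableEq S] [DecidableEq A]
    (K : ℕ) [NeZero K] (η : ℝ) (hη0 : 0 < η) (hη1 : η < 1)
    (τ : ℕ)
    (traj : Fin K → ℕ → S × A)
    (v1 v2 t : ℕ) (hτt : τ ∣ t)
    (sa : S × A) :
    -- (i)
    lamW η traj v1 v2 sa
        ≤ (1 - η) ^ (Finset.univ.inf' Finset.univ_nonempty
            fun k : Fin K => Nvis (traj k) v1 v2 sa) ∧
    -- (ii)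
    om0 η τ traj t sa
        + ∑ k : Fin K, ∑ u ∈ visits (traj k) 0 t sa, omU η τ traj k u t sa = 1 ∧
    -- (iii)
    (∀ h' : ℕ, h' ≤ t / τ →
      ∑ k : Fin K, ∑ u ∈ visits (traj k) 0 (h' * τ) sa, omU η τ traj k u t sa
        ≤ (1 - η) ^ (∑ h ∈ Finset.Ico h' (t / τ),
            Finset.univ.inf' Finset.univ_nonempty
              fun k : Fin K => Nvis (traj k) (h * τ) ((h + 1) * τ) sa)) ∧
    -- (iv)
    ∑ k : Fin K, ∑ u ∈ visits (traj k) 0 t sa, (omU η τ traj k u t sa) ^ 2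
        ≤ 2 * η / K := by
  refine ⟨lamW_le_pow_inf hη0.le hη1.le v1 v2, om0_add_sum_omU hτt, fun h' hh' => ?_, ?_⟩
  · rw [sum_omU_prefix hh']
    linarith [blockProd_nonneg (τ := τ) (traj := traj) (sa := sa) hη1.le 0 (t / τ),
      blockProd_le_pow_sum_inf (τ := τ) (traj := traj) (sa := sa) hη0.le hη1.le h' (t / τ)]
  · calc _ ≤ η / K := sum_sq_omU_le hη0.le hη1.le hτt
      _ ≤ 2 * η / K := by gcongr; linarith

/-- properties of the equal-averaging aggregation weights. -/
theorem eq_avg_weight_properties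
    {S A : Type*} [Fintype S] [Fintype A] [DecidableEq S] [DecidableEq A]
    (K : ℕ) [NeZero K] (η : ℝ) (hη0 : 0 < η) (hη1 : η < 1)
    (τ T : ℕ) (hτ : 1 ≤ τ) (hτT : τ ∣ T)
    (traj : Fin K → ℕ → S × A)
    (v1 v2 t : ℕ) (hv12 : v1 ≤ v2) (hv2t : v2 ≤ t) (htT : t ≤ T) (hτt : τ ∣ t)
    (sa : S × A) :
    -- (i)
    lamW η traj v1 v2 sa
        ≤ (1 - η) ^ (Finset.univ.inf' Finset.univ_nonempty
            fun k : Fin K => Nvis (traj k) v1 v2 sa) ∧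
    -- (ii)
    om0 η τ traj t sa
        + ∑ k : Fin K, ∑ u ∈ visits (traj k) 0 t sa, omU η τ traj k u t sa = 1 ∧
    -- (iii)
    (∀ h' : ℕ, h' ≤ t / τ →
      ∑ k : Fin K, ∑ u ∈ visits (traj k) 0 (h' * τ) sa, omU η τ traj k u t sa
        ≤ (1 - η) ^ (∑ h ∈ Finset.Ico h' (t / τ),
            Finset.univ.inf' Finset.univ_nonempty
              fun k : Fin K => Nvis (traj k) (h * τ) ((h + 1) * τ) sa)) ∧
    -- (iv)
    ∑ k : Fin K, ∑ u ∈ visits (traj k) 0 t sa, (omU η τ traj k u t sa) ^ 2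
        ≤ 2 * η / K :=
  eq_avg_weight_properties_general K η hη0 hη1 τ traj v1 v2 t hτt sa
end

section
/- Deterministic bounds on the clipped decoupling weights (importance averaging): Fix a state-action pair (s,a) ∈ S×A, integers 1 ≤ t ≤ T with τ | t, and 1 ≤ l ≤ ⌈t/(Mτ)⌉, where M = ⌊1/(8η μ_avg(s,a) τ)⌋, and set h_0 = max{0, φ(t) − lM}. Suppose 4ητ ≤ 1. Then for any realization of the trajectories: (i) x̂_u^k(s,a) ≤ 9η/K for every k and every u ∈ [h_0 τ, (φ(t) − (l-1)M)τ); (ii) Σ_{h=h_0}^{φ(t)-(l-1)M-1} Σ_{k=1}^K Σ_{u∈𝒰_{hτ,(h+1)τ}^k(s,a)} x̂_u^k(s,a) ≤ 16 η μ_avg(s,a) M τ; (iii) Σ_{h=h_0}^{φ(t)-(l-1)M-1} Σ_{k=1}^K Σ_{u∈𝒰_{hτ,(h+1)τ}^k(s,a)} (x̂_u^k(s,a))^2 ≤ 64 η^2 μ_avg(s,a) M τ / K. -/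
/-- Decoupling weight (importance averaging):
`x_u^k(s,a) = [Π_{h'=h₀}^{φ(u)-1} (Σ_{k'}(1-η)^{-N_{h'τ,(h'+1)τ}^{k'}(s,a)}/K)] ·
(η (1-η)^{-N_{φ(u)τ,u+1}^k(s,a)} / K)`, with `φ(u) = ⌊u/τ⌋`. -/
noncomputable def xIm {X : Type*} [DecidableEq X] {K : ℕ} (η : ℝ) (τ h0 : ℕ)
    (traj : Fin K → ℕ → X) (k : Fin K) (u : ℕ) (sa : X) : ℝ :=
  (∏ h' ∈ Finset.Ico h0 (u / τ),
      (∑ k' : Fin K, ((1 - η) ^ Nvis (traj k') (h' * τ) ((h' + 1) * τ) sa)⁻¹) / K)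
    * (η * ((1 - η) ^ Nvis (traj k) (u / τ * τ) (u + 1) sa)⁻¹ / K)

/- Clipped decoupling weight (importance averaging): equals `x_u^k(s,a)` if
`Σ_k N_{h₀τ, φ(u)τ}^k(s,a) ≤ bound` and `0` otherwise. -/
open Classical in
noncomputable def xhatIm {X : Type*} [DecidableEq X] {K : ℕ} (η : ℝ) (τ h0 : ℕ) (bound : ℝ)
    (traj : Fin K → ℕ → X) (k : Fin K) (u : ℕ) (sa : X) : ℝ :=
  if (∑ k' : Fin K, (Nvis (traj k') (h0 * τ) (u / τ * τ) sa : ℝ)) ≤ bound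
  then xIm η τ h0 traj k u sa else 0

lemma Nvis_le {X : Type*} [DecidableEq X] (x : ℕ → X) (v1 v2 : ℕ) (sa : X) :
    Nvis x v1 v2 sa ≤ v2 - v1 := by
  calc Nvis x v1 v2 sa ≤ (Finset.Ico v1 v2).card := Finset.card_filter_le _ _
  _ = v2 - v1 := Nat.card_Ico v1 v2

lemma Nvis_mono {X : Type*} [DecidableEq X] (x : ℕ → X) {v1 v2 v2' : ℕ} (h : v2 ≤ v2') (sa : X) :
    Nvis x v1 v2 sa ≤ Nvis x v1 v2' sa := by
  apply Finset.card_le_card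
  exact Finset.filter_subset_filter _ (Finset.Ico_subset_Ico le_rfl h)

lemma Nvis_add {X : Type*} [DecidableEq X] (x : ℕ → X) {v1 v2 v3 : ℕ}
    (h12 : v1 ≤ v2) (h23 : v2 ≤ v3) (sa : X) :
    Nvis x v1 v2 sa + Nvis x v2 v3 sa = Nvis x v1 v3 sa := by
  unfold Nvis visits
  rw [← Finset.card_union_of_disjoint
      (Finset.disjoint_filter_filter (Finset.Ico_disjoint_Ico_consecutive v1 v2 v3)),
    ← Finset.filter_union, Finset.Ico_union_Ico_eq_Ico h12 h23]

lemma Nvis_block {X : Type*} [DecidableEq X] (x : ℕ → X) (τ h0 : ℕ) (sa : X) :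
    ∀ h, h0 ≤ h → ∑ h' ∈ Finset.Ico h0 h, Nvis x (h' * τ) ((h' + 1) * τ) sa
      = Nvis x (h0 * τ) (h * τ) sa := by
  intro h hh
  refine Nat.le_induction ?_ ?_ h hh
  · simp [Nvis, visits]
  · intro m hm ih
    rw [Finset.sum_Ico_succ_top hm, ih,
      Nvis_add x (mul_le_mul_left hm τ) (mul_le_mul_left (Nat.le_succ m) τ) sa]

lemma geom_visits {X : Type*} [DecidableEq X] {η : ℝ} (hη1 : η < 1) (x : ℕ → X) (a : ℕ) (sa : X) :
    ∀ v, η * ∑ u ∈ visits x a v sa, ((1 - η)⁻¹) ^ (Nvis x a (u + 1) sa)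
      = ((1 - η)⁻¹) ^ (Nvis x a v sa) - 1 := by
  intro v
  induction v with
  | zero => simp [visits, Nvis]
  | succ w ih =>
    rcases lt_or_ge w a with hw | hw
    · have h1 : Finset.Ico a (w + 1) = ∅ := Finset.Ico_eq_empty (by omega)
      simp [visits, Nvis, h1]
    · by_cases hxv : x w = sa
      · have hins : visits x a (w + 1) sa = insert w (visits x a w sa) := by
          unfold visits
          rw [Nat.Ico_succ_right_eq_insert_Ico hw, Finset.filter_insert, if_pos hxv]
        have hnot : w ∉ visits x a w sa := by
          simp [visits]
        have hN : Nvis x a (w + 1) sa = Nvis x a w sa + 1 := by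
          unfold Nvis
          rw [hins, Finset.card_insert_of_notMem hnot]
        rw [hins, Finset.sum_insert hnot, hN]
        have hr : (1 - η) * (1 - η)⁻¹ = 1 := mul_inv_cancel₀ (by linarith)
        rw [pow_succ]
        linear_combination ih - ((1 - η)⁻¹) ^ (Nvis x a w sa) * hr
      · have heq : visits x a (w + 1) sa = visits x a w sa := by
          unfold visits
          rw [Nat.Ico_succ_right_eq_insert_Ico hw, Finset.filter_insert, if_neg hxv]
        have hN : Nvis x a (w + 1) sa = Nvis x a w sa := by unfold Nvis; rw [heq]
        rw [heq, hN]; exact ih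

lemma pow_inv_le {η : ℝ} (hη0 : 0 < η) (hη1 : η < 1) (τ : ℕ) (hητ : η * τ ≤ 1 / 4) :
    ∀ n ≤ τ, ((1 - η)⁻¹) ^ n ≤ 1 + (8 / 5) * η * n := by
  have h1 : ∀ n ≤ τ, (1 : ℝ) ≤ (1 + (8 / 5) * η * n) * (1 - η) ^ n := by
    intro n hn
    induction n with
    | zero => simp
    | succ m ih =>
      have hm : m ≤ τ := by omega
      have ihm := ih hm
      have hmτ : ((m : ℝ) + 1) ≤ τ := by exact_mod_cast hn
      have hηm : η * ((m : ℝ) + 1) ≤ 1 / 4 := by nlinarith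
      have hpow : (0 : ℝ) ≤ (1 - η) ^ m := pow_nonneg (by linarith) m
      have h2 : (8 / 5) * η * ((m : ℝ) + 1) ≤ 2 / 5 := by linarith
      have key : (1 + (8 / 5) * η * m) ≤ (1 + (8 / 5) * η * ((m : ℝ) + 1)) * (1 - η) := by
        nlinarith [mul_le_mul_of_nonneg_left h2 hη0.le]
      push_cast
      calc (1 : ℝ) ≤ (1 + (8 / 5) * η * m) * (1 - η) ^ m := ihm
      _ ≤ ((1 + (8 / 5) * η * ((m : ℝ) + 1)) * (1 - η)) * (1 - η) ^ m :=
          mul_le_mul_of_nonneg_right key hpow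
      _ = (1 + (8 / 5) * η * ((m : ℝ) + 1)) * (1 - η) ^ (m + 1) := by ring
  intro n hn
  have hρ : (0 : ℝ) < 1 - η := by linarith
  have hp : (0 : ℝ) < (1 - η) ^ n := pow_pos hρ n
  have e : ((1 - η) ^ n)⁻¹ * ((1 + (8 / 5) * η * n) * (1 - η) ^ n) = 1 + (8 / 5) * η * n := by
    field_simp
  rw [inv_pow]
  calc ((1 - η) ^ n)⁻¹ = ((1 - η) ^ n)⁻¹ * 1 := (mul_one _).symm
  _ ≤ ((1 - η) ^ n)⁻¹ * ((1 + (8 / 5) * η * n) * (1 - η) ^ n) :=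
      mul_le_mul_of_nonneg_left (h1 n hn) (inv_nonneg.mpr hp.le)
  _ = 1 + (8 / 5) * η * n := e

lemma prod_one_add_le {ι : Type*} (s : Finset ι) (f : ι → ℝ) (hf : ∀ i ∈ s, 0 ≤ f i) :
    ∏ i ∈ s, (1 + f i) ≤ Real.exp (∑ i ∈ s, f i) := by
  rw [Real.exp_sum]
  apply Finset.prod_le_prod
  · intro i hi; linarith [hf i hi]
  · intro i hi; linarith [Real.add_one_le_exp (f i)]

lemma exp_two_fifths : Real.exp (2 / 5 : ℝ) ≤ 3 / 2 := by
  have h5 : Real.exp (2 / 5 : ℝ) ^ (5 : ℕ) = Real.exp 2 := by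
    rw [← Real.exp_nat_mul]; norm_num
  have h2 : Real.exp (2 : ℝ) = Real.exp 1 ^ (2 : ℕ) := by
    rw [← Real.exp_nat_mul]; norm_num
  by_contra h
  push_neg at h
  have h3 : (3 / 2 : ℝ) ^ (5 : ℕ) < Real.exp (2 / 5 : ℝ) ^ (5 : ℕ) :=
    pow_lt_pow_left₀ h (by norm_num) (by norm_num)
  rw [h5, h2] at h3
  nlinarith [Real.exp_one_lt_d9, Real.exp_pos 1]

noncomputable def Pfun {X : Type*} [DecidableEq X] {K : ℕ} (η : ℝ) (τ h0 : ℕ)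
    (traj : Fin K → ℕ → X) (sa : X) (h : ℕ) : ℝ :=
  ∏ h' ∈ Finset.Ico h0 h,
    (∑ k' : Fin K, ((1 - η)⁻¹) ^ Nvis (traj k') (h' * τ) ((h' + 1) * τ) sa) / K

noncomputable def gfun {X : Type*} [DecidableEq X] {K : ℕ} (τ h0 : ℕ)
    (traj : Fin K → ℕ → X) (sa : X) (h : ℕ) : ℝ :=
  ∑ k' : Fin K, (Nvis (traj k') (h0 * τ) (h * τ) sa : ℝ)

noncomputable def Sfun {X : Type*} [DecidableEq X] {K : ℕ} (τ : ℕ)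
    (traj : Fin K → ℕ → X) (sa : X) (h : ℕ) : ℝ :=
  ∑ k' : Fin K, (Nvis (traj k') (h * τ) ((h + 1) * τ) sa : ℝ)


set_option maxHeartbeats 2000000 in
/-- deterministic bounds on the clipped decoupling weights
(importance averaging). -/
theorem clipped_weight_bounds_im_avg
    {S A : Type*} [Fintype S] [Fintype A] [DecidableEq S] [DecidableEq A]
    (K : ℕ) [NeZero K] (η : ℝ) (hη0 : 0 < η) (hη1 : η < 1)
    (τ T : ℕ) (hτ : 1 ≤ τ) (hτT : τ ∣ T)
    (traj : Fin K → ℕ → S × A)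
    (μb : Fin K → S × A → ℝ)
    (hμb0 : ∀ k sa, 0 ≤ μb k sa) (hμb1 : ∀ k, ∑ sa : S × A, μb k sa = 1)
    (sa : S × A)
    (μa : ℝ) (hμa : μa = (K : ℝ)⁻¹ * ∑ k : Fin K, μb k sa) (hμa_pos : 0 < μa)
    (t : ℕ) (ht1 : 1 ≤ t) (htT : t ≤ T) (hτt : τ ∣ t)
    (M : ℕ) (hM : M = ⌊1 / (8 * η * μa * τ)⌋₊)
    (l : ℕ) (hl1 : 1 ≤ l) (hl2 : l ≤ ⌈(t : ℝ) / (M * τ)⌉₊)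
    (h0 : ℕ) (hh0 : h0 = t / τ - l * M)
    (hητ : 4 * η * τ ≤ 1) :
    -- (i)
    (∀ (k : Fin K) (u : ℕ), h0 * τ ≤ u → u < (t / τ - (l - 1) * M) * τ →
      xhatIm η τ h0 (2 * K * μa * M * τ) traj k u sa ≤ 9 * η / K) ∧
    -- (ii)
    (∑ h ∈ Finset.Ico h0 (t / τ - (l - 1) * M), ∑ k : Fin K,
        ∑ u ∈ visits (traj k) (h * τ) ((h + 1) * τ) sa,
          xhatIm η τ h0 (2 * K * μa * M * τ) traj k u sa)
      ≤ 16 * η * μa * M * τ ∧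
    -- (iii)
    (∑ h ∈ Finset.Ico h0 (t / τ - (l - 1) * M), ∑ k : Fin K,
        ∑ u ∈ visits (traj k) (h * τ) ((h + 1) * τ) sa,
          (xhatIm η τ h0 (2 * K * μa * M * τ) traj k u sa) ^ 2)
      ≤ 64 * η ^ 2 * μa * M * τ / K := by
  have hτ0 : 0 < τ := hτ
  have hK0 : (0 : ℝ) < K := by
    exact_mod_cast Nat.pos_of_ne_zero (NeZero.ne K)
  have hτR : (1 : ℝ) ≤ τ := by exact_mod_cast hτ
  have hη4 : η ≤ 1 / 4 := by nlinarith
  have hητ4 : η * τ ≤ 1 / 4 := by nlinarith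
  have hρ0 : (0 : ℝ) < 1 - η := by linarith
  have hM1 : 1 ≤ M := by
    rcases Nat.eq_zero_or_pos M with h | h
    · rw [h] at hl2
      simp at hl2
      omega
    · exact h
  have hM1R : (1 : ℝ) ≤ M := by exact_mod_cast hM1
  have hd0 : (0 : ℝ) < 8 * η * μa * τ := by positivity
  have hMx : (M : ℝ) ≤ 1 / (8 * η * μa * τ) := by
    rw [hM]; exact Nat.floor_le (by positivity)
  have hyle : 8 * η * μa * M * τ ≤ 1 := by
    calc 8 * η * μa * (M : ℝ) * τ = (8 * η * μa * τ) * M := by ring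
    _ ≤ (8 * η * μa * τ) * (1 / (8 * η * μa * τ)) := mul_le_mul_of_nonneg_left hMx hd0.le
    _ = 1 := by field_simp
  have hyge : (1 : ℝ) ≤ 16 * η * μa * M * τ := by
    rcases le_or_gt (1 / (8 * η * μa * τ)) 2 with hc | hc
    · have h1 : (1 : ℝ) ≤ 2 * (8 * η * μa * τ) := by
        rw [div_le_iff₀ hd0] at hc; linarith
      nlinarith
    · have h1 : 1 / (8 * η * μa * τ) - 1 < (M : ℝ) := by
        rw [hM]; exact Nat.sub_one_lt_floor _
      have h2 : (8 * η * μa * τ) * (1 / (8 * η * μa * τ)) = 1 := by field_simp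
      have h3 : (8 * η * μa * τ) * (1 / (8 * η * μa * τ) - 1) < (8 * η * μa * τ) * M :=
        mul_lt_mul_of_pos_left h1 hd0
      have h4 : 2 * (8 * η * μa * τ) < 1 := by
        rw [lt_div_iff₀ hd0] at hc; linarith
      nlinarith
  have hr1 : (1 : ℝ) ≤ (1 - η)⁻¹ := by
    rw [le_inv_comm₀ one_pos hρ0]; linarith
  have hrnn : (0 : ℝ) ≤ (1 - η)⁻¹ := by linarith
  set B : ℝ := 2 * K * μa * M * τ with hB
  have hB0 : (0 : ℝ) ≤ B := by positivity
  have hBK : (0 : ℝ) ≤ B + K * τ := by positivity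
  -- number of visits within one block is at most τ
  have hnle : ∀ (k : Fin K) (h : ℕ), Nvis (traj k) (h * τ) ((h + 1) * τ) sa ≤ τ := by
    intro k h
    have h1 := Nvis_le (traj k) (h * τ) ((h + 1) * τ) sa
    have h2 : (h + 1) * τ - h * τ = τ := by
      rw [add_mul, one_mul]; omega
    omega
  have hS0 : ∀ h, 0 ≤ Sfun τ traj sa h := by
    intro h
    exact Finset.sum_nonneg fun k _ => by positivity
  have hSle : ∀ h, Sfun τ traj sa h ≤ K * τ := by
    intro h
    calc Sfun τ traj sa h ≤ ∑ _k : Fin K, (τ : ℝ) :=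
          Finset.sum_le_sum fun k _ => by exact_mod_cast hnle k h
    _ = K * τ := by simp [Finset.sum_const, mul_comm]
  have hg0 : ∀ h, 0 ≤ gfun τ h0 traj sa h := by
    intro h
    exact Finset.sum_nonneg fun k _ => by positivity
  have hgadd : ∀ h, h0 ≤ h →
      gfun τ h0 traj sa (h + 1) = gfun τ h0 traj sa h + Sfun τ traj sa h := by
    intro h hh
    unfold gfun Sfun
    rw [← Finset.sum_add_distrib]
    apply Finset.sum_congr rfl
    intro k _
    rw [← Nvis_add (traj k) (mul_le_mul_left hh τ) (mul_le_mul_left (Nat.le_succ h) τ) sa]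
    push_cast; ring
  have hSg : ∀ h, h0 ≤ h →
      ∑ h' ∈ Finset.Ico h0 h, Sfun τ traj sa h' = gfun τ h0 traj sa h := by
    intro h hh
    unfold Sfun gfun
    rw [Finset.sum_comm]
    apply Finset.sum_congr rfl
    intro k _
    rw [← Nvis_block (traj k) τ h0 sa h hh, Nat.cast_sum]
  -- bound on the product under the clipping condition
  have hP1 : ∀ h, 1 ≤ Pfun η τ h0 traj sa h := by
    intro h
    unfold Pfun
    have h1 : ∀ h' ∈ Finset.Ico h0 h, (1:ℝ) ≤
        (∑ k' : Fin K, ((1 - η)⁻¹) ^ Nvis (traj k') (h' * τ) ((h' + 1) * τ) sa) / K := by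
      intro h' _
      rw [le_div_iff₀ hK0, one_mul]
      calc (K : ℝ) = ∑ _k' : Fin K, (1 : ℝ) := by simp
      _ ≤ _ := Finset.sum_le_sum fun k' _ => one_le_pow₀ hr1
    calc (1:ℝ) = ∏ _h' ∈ Finset.Ico h0 h, (1:ℝ) := by simp
    _ ≤ _ := Finset.prod_le_prod (fun _ _ => zero_le_one) h1
  have hP_le : ∀ h, h0 ≤ h → gfun τ h0 traj sa h ≤ B → Pfun η τ h0 traj sa h ≤ 3 / 2 := by
    intro h hh hcl
    have step : ∀ h' ∈ Finset.Ico h0 h,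
        (∑ k' : Fin K, ((1 - η)⁻¹) ^ Nvis (traj k') (h' * τ) ((h' + 1) * τ) sa) / K
          ≤ 1 + (8 / 5) * η * Sfun τ traj sa h' / K := by
      intro h' _
      rw [div_le_iff₀ hK0]
      have e : (1 + 8 / 5 * η * Sfun τ traj sa h' / K) * K = K + 8 / 5 * η * Sfun τ traj sa h' := by
        field_simp
      rw [e]
      have : ∑ k' : Fin K, ((1 - η)⁻¹) ^ Nvis (traj k') (h' * τ) ((h' + 1) * τ) sa
          ≤ ∑ k' : Fin K, (1 + (8 / 5) * η * (Nvis (traj k') (h' * τ) ((h' + 1) * τ) sa : ℝ)) :=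
        Finset.sum_le_sum fun k' _ =>
          pow_inv_le hη0 hη1 τ hητ4 _ (hnle k' h')
      calc _ ≤ _ := this
      _ = K + 8 / 5 * η * Sfun τ traj sa h' := by
          rw [Finset.sum_add_distrib, ← Finset.mul_sum]
          unfold Sfun
          simp [mul_assoc]
    calc Pfun η τ h0 traj sa h
        ≤ ∏ h' ∈ Finset.Ico h0 h, (1 + (8 / 5) * η * Sfun τ traj sa h' / K) := by
          unfold Pfun
          apply Finset.prod_le_prod _ step
          intro h' _
          apply div_nonneg _ hK0.le
          exact Finset.sum_nonneg fun k' _ => pow_nonneg hrnn _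
    _ ≤ Real.exp (∑ h' ∈ Finset.Ico h0 h, (8 / 5) * η * Sfun τ traj sa h' / K) := by
          apply prod_one_add_le
          intro h' _
          have := hS0 h'
          positivity
    _ ≤ Real.exp (2 / 5) := by
          apply Real.exp_le_exp.2
          have e : ∑ h' ∈ Finset.Ico h0 h, (8 / 5) * η * Sfun τ traj sa h' / K
              = (8 / 5) * (η / K) * gfun τ h0 traj sa h := by
            rw [← hSg h hh, Finset.mul_sum]
            apply Finset.sum_congr rfl
            intro h' _; ring
          rw [e]
          have h1 : (8 / 5) * (η / K) * gfun τ h0 traj sa h ≤ (8 / 5) * (η / K) * B :=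
            mul_le_mul_of_nonneg_left hcl (by positivity)
          have h2 : (8 / 5) * (η / K) * B = (16 / 5) * (η * μa * M * τ) := by
            rw [hB]; field_simp; ring
          linarith
    _ ≤ 3 / 2 := exp_two_fifths
  -- pointwise bound on the clipped weight
  have hxhat_nonneg : ∀ (k : Fin K) (u : ℕ), 0 ≤ xhatIm η τ h0 B traj k u sa := by
    intro k u
    unfold xhatIm
    split
    · unfold xIm
      apply mul_nonneg
      · apply Finset.prod_nonneg
        intro h' _
        apply div_nonneg _ hK0.le
        exact Finset.sum_nonneg fun k' _ => inv_nonneg.2 (pow_nonneg hρ0.le _)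
      · exact div_nonneg (mul_nonneg hη0.le (inv_nonneg.2 (pow_nonneg hρ0.le _))) hK0.le
    · exact le_refl 0
  have hxIm_eq : ∀ (k : Fin K) (u : ℕ), xIm η τ h0 traj k u sa
      = Pfun η τ h0 traj sa (u / τ)
        * (η * ((1 - η)⁻¹) ^ (Nvis (traj k) (u / τ * τ) (u + 1) sa) / K) := by
    intro k u
    simp only [xIm, Pfun, ← inv_pow]
  have hxhat_le : ∀ (k : Fin K) (u : ℕ), h0 * τ ≤ u →
      xhatIm η τ h0 B traj k u sa ≤ (21 / 10) * η / K := by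
    intro k u hu
    unfold xhatIm
    split
    case isTrue hcl =>
      have hdivle : h0 ≤ u / τ := (Nat.le_div_iff_mul_le hτ0).2 hu
      have hm : Nvis (traj k) (u / τ * τ) (u + 1) sa ≤ τ := by
        have e : u / τ * τ + u % τ = u := Nat.div_add_mod' u τ
        have hmod : u % τ < τ := Nat.mod_lt u hτ0
        have h2 : u + 1 ≤ u / τ * τ + τ := by omega
        calc Nvis (traj k) (u / τ * τ) (u + 1) sa
            ≤ Nvis (traj k) (u / τ * τ) (u / τ * τ + τ) sa := Nvis_mono (traj k) h2 sa
        _ ≤ u / τ * τ + τ - u / τ * τ := Nvis_le _ _ _ _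
        _ = τ := by omega
      have hPle : Pfun η τ h0 traj sa (u / τ) ≤ 3 / 2 := hP_le (u / τ) hdivle hcl
      have hpow : ((1 - η)⁻¹) ^ (Nvis (traj k) (u / τ * τ) (u + 1) sa) ≤ 7 / 5 := by
        have h1 := pow_inv_le hη0 hη1 τ hητ4 _ hm
        have h2 : (Nvis (traj k) (u / τ * τ) (u + 1) sa : ℝ) ≤ τ := by exact_mod_cast hm
        nlinarith
      rw [hxIm_eq k u]
      have hA : 0 ≤ η * ((1 - η)⁻¹) ^ (Nvis (traj k) (u / τ * τ) (u + 1) sa) / K :=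
        div_nonneg (mul_nonneg hη0.le (pow_nonneg hrnn _)) hK0.le
      calc Pfun η τ h0 traj sa (u / τ)
            * (η * ((1 - η)⁻¹) ^ (Nvis (traj k) (u / τ * τ) (u + 1) sa) / K)
          ≤ (3 / 2) * (η * ((1 - η)⁻¹) ^ (Nvis (traj k) (u / τ * τ) (u + 1) sa) / K) :=
            mul_le_mul_of_nonneg_right hPle hA
      _ ≤ (3 / 2) * (η * (7 / 5) / K) := by
            apply mul_le_mul_of_nonneg_left _ (by norm_num)
            apply div_le_div_of_nonneg_right _ hK0.le
            exact mul_le_mul_of_nonneg_left hpow hη0.le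
      _ = (21 / 10) * η / K := by ring
    case isFalse =>
      positivity
  -- clipped-sum bound
  have hclipsum : ∀ N : ℕ,
      (∑ h ∈ Finset.Ico h0 N, if gfun τ h0 traj sa h ≤ B then Sfun τ traj sa h else 0)
        ≤ gfun τ h0 traj sa N
      ∧ (∑ h ∈ Finset.Ico h0 N, if gfun τ h0 traj sa h ≤ B then Sfun τ traj sa h else 0)
        ≤ B + K * τ := by
    intro N
    induction N with
    | zero =>
      rw [show Finset.Ico h0 0 = ∅ from Finset.Ico_eq_empty (by omega)]
      simp
      exact ⟨hg0 0, hBK⟩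
    | succ N ih =>
      rcases lt_or_ge N h0 with hN | hN
      · rw [show Finset.Ico h0 (N + 1) = ∅ from Finset.Ico_eq_empty (by omega)]
        simp
        exact ⟨hg0 (N + 1), hBK⟩
      · rw [Finset.sum_Ico_succ_top hN]
        obtain ⟨ih1, ih2⟩ := ih
        have hgN := hgadd N hN
        by_cases hc : gfun τ h0 traj sa N ≤ B
        · rw [if_pos hc]
          constructor
          · rw [hgN]; linarith
          · linarith [hSle N]
        · rw [if_neg hc]
          constructor
          · rw [hgN]; linarith [hS0 N]
          · simpa using ih2
  -- block-level bound
  have hblock : ∀ h, h0 ≤ h →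
      (∑ k : Fin K, ∑ u ∈ visits (traj k) (h * τ) ((h + 1) * τ) sa,
          xhatIm η τ h0 B traj k u sa)
        ≤ (12 / 5) * (η / K) * (if gfun τ h0 traj sa h ≤ B then Sfun τ traj sa h else 0) := by
    intro h hh
    have hud : ∀ u ∈ Finset.Ico (h * τ) ((h + 1) * τ), u / τ = h := by
      intro u hu
      obtain ⟨hu1, hu2⟩ := Finset.mem_Ico.1 hu
      exact Nat.div_eq_of_lt_le hu1 hu2
    by_cases hcl : gfun τ h0 traj sa h ≤ B
    · have hcl' : (∑ k' : Fin K, (Nvis (traj k') (h0 * τ) (h * τ) sa : ℝ)) ≤ B := hcl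
      rw [if_pos hcl]
      have hk : ∀ k : Fin K,
          (∑ u ∈ visits (traj k) (h * τ) ((h + 1) * τ) sa, xhatIm η τ h0 B traj k u sa)
            = Pfun η τ h0 traj sa h
              * (((1 - η)⁻¹) ^ (Nvis (traj k) (h * τ) ((h + 1) * τ) sa) - 1) / K := by
        intro k
        have hstep : ∀ u ∈ visits (traj k) (h * τ) ((h + 1) * τ) sa,
            xhatIm η τ h0 B traj k u sa
              = Pfun η τ h0 traj sa h / K
                * (η * ((1 - η)⁻¹) ^ (Nvis (traj k) (h * τ) (u + 1) sa)) := by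
          intro u hu
          have hu' : u ∈ Finset.Ico (h * τ) ((h + 1) * τ) := Finset.mem_filter.1 hu |>.1
          have hd : u / τ = h := hud u hu'
          unfold xhatIm
          rw [hxIm_eq k u, hd, if_pos hcl']
          ring
        calc (∑ u ∈ visits (traj k) (h * τ) ((h + 1) * τ) sa, xhatIm η τ h0 B traj k u sa)
            = ∑ u ∈ visits (traj k) (h * τ) ((h + 1) * τ) sa,
                Pfun η τ h0 traj sa h / K
                  * (η * ((1 - η)⁻¹) ^ (Nvis (traj k) (h * τ) (u + 1) sa)) :=
              Finset.sum_congr rfl hstep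
        _ = Pfun η τ h0 traj sa h / K
              * (η * ∑ u ∈ visits (traj k) (h * τ) ((h + 1) * τ) sa,
                  ((1 - η)⁻¹) ^ (Nvis (traj k) (h * τ) (u + 1) sa)) := by
              rw [← Finset.mul_sum, ← Finset.mul_sum]
        _ = Pfun η τ h0 traj sa h / K
              * (((1 - η)⁻¹) ^ (Nvis (traj k) (h * τ) ((h + 1) * τ) sa) - 1) := by
              rw [geom_visits hη1 (traj k) (h * τ) sa ((h + 1) * τ)]
        _ = _ := by ring
      rw [Finset.sum_congr rfl fun k _ => hk k]
      have hterm : ∀ k : Fin K,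
          Pfun η τ h0 traj sa h
              * (((1 - η)⁻¹) ^ (Nvis (traj k) (h * τ) ((h + 1) * τ) sa) - 1) / K
            ≤ (12 / 5) * (η / K) * (Nvis (traj k) (h * τ) ((h + 1) * τ) sa : ℝ) := by
        intro k
        have hn := hnle k h
        have h1 : ((1 - η)⁻¹) ^ (Nvis (traj k) (h * τ) ((h + 1) * τ) sa) - 1
            ≤ (8 / 5) * η * (Nvis (traj k) (h * τ) ((h + 1) * τ) sa : ℝ) := by
          linarith [pow_inv_le hη0 hη1 τ hητ4 _ hn]
        have h2 : (0 : ℝ) ≤ ((1 - η)⁻¹) ^ (Nvis (traj k) (h * τ) ((h + 1) * τ) sa) - 1 := by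
          linarith [one_le_pow₀ hr1 (n := Nvis (traj k) (h * τ) ((h + 1) * τ) sa)]
        have h3 := hP_le h hh hcl
        have h4 : Pfun η τ h0 traj sa h
              * (((1 - η)⁻¹) ^ (Nvis (traj k) (h * τ) ((h + 1) * τ) sa) - 1)
            ≤ (3 / 2) * ((8 / 5) * η * (Nvis (traj k) (h * τ) ((h + 1) * τ) sa : ℝ)) :=
          mul_le_mul h3 h1 h2 (by norm_num)
        calc _ ≤ (3 / 2) * ((8 / 5) * η * (Nvis (traj k) (h * τ) ((h + 1) * τ) sa : ℝ)) / K :=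
              div_le_div_of_nonneg_right h4 hK0.le
        _ = (12 / 5) * (η / K) * (Nvis (traj k) (h * τ) ((h + 1) * τ) sa : ℝ) := by ring
      calc _ ≤ ∑ k : Fin K,
            (12 / 5) * (η / K) * (Nvis (traj k) (h * τ) ((h + 1) * τ) sa : ℝ) :=
            Finset.sum_le_sum fun k _ => hterm k
      _ = (12 / 5) * (η / K) * Sfun τ traj sa h := by
            rw [← Finset.mul_sum]; rfl
    · rw [if_neg hcl, mul_zero]
      apply le_of_eq
      apply Finset.sum_eq_zero
      intro k _
      apply Finset.sum_eq_zero
      intro u hu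
      have hu' : u ∈ Finset.Ico (h * τ) ((h + 1) * τ) := Finset.mem_filter.1 hu |>.1
      have hd : u / τ = h := hud u hu'
      have hcl' : ¬ (∑ k' : Fin K, (Nvis (traj k') (h0 * τ) (h * τ) sa : ℝ)) ≤ B := hcl
      unfold xhatIm
      rw [hd, if_neg hcl']
  -- part (ii)
  have part2 : (∑ h ∈ Finset.Ico h0 (t / τ - (l - 1) * M), ∑ k : Fin K,
        ∑ u ∈ visits (traj k) (h * τ) ((h + 1) * τ) sa,
          xhatIm η τ h0 B traj k u sa)
      ≤ 16 * η * μa * M * τ := by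
    calc (∑ h ∈ Finset.Ico h0 (t / τ - (l - 1) * M), ∑ k : Fin K,
        ∑ u ∈ visits (traj k) (h * τ) ((h + 1) * τ) sa,
          xhatIm η τ h0 B traj k u sa)
        ≤ ∑ h ∈ Finset.Ico h0 (t / τ - (l - 1) * M),
            (12 / 5) * (η / K) * (if gfun τ h0 traj sa h ≤ B then Sfun τ traj sa h else 0) :=
          Finset.sum_le_sum fun h hh => hblock h (Finset.mem_Ico.1 hh).1
    _ = (12 / 5) * (η / K) * ∑ h ∈ Finset.Ico h0 (t / τ - (l - 1) * M),
            (if gfun τ h0 traj sa h ≤ B then Sfun τ traj sa h else 0) := by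
          rw [Finset.mul_sum]
    _ ≤ (12 / 5) * (η / K) * (B + K * τ) :=
          mul_le_mul_of_nonneg_left (hclipsum _).2 (by positivity)
    _ ≤ 16 * η * μa * M * τ := by
          have e : (12 / 5) * (η / K) * (B + K * τ)
              = (24 / 5) * (η * μa * M * τ) + (12 / 5) * (η * τ) := by
            rw [hB]; field_simp; ring
          rw [e]
          have h1 : 4 * (η * τ) ≤ 16 * (η * μa * M * τ) := by
            have : 4 * η * τ ≤ 16 * η * μa * M * τ := le_trans hητ hyge
            linarith [this]
          have h2 : (0 : ℝ) ≤ η * μa * M * τ := by positivity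
          nlinarith
  refine ⟨?_, part2, ?_⟩
  · intro k u hu _
    have h1 := hxhat_le k u hu
    have h2 : (0 : ℝ) ≤ η / K := by positivity
    calc xhatIm η τ h0 B traj k u sa ≤ (21 / 10) * η / K := h1
    _ ≤ 9 * η / K := by
        rw [mul_div_assoc, mul_div_assoc]
        nlinarith
  · calc (∑ h ∈ Finset.Ico h0 (t / τ - (l - 1) * M), ∑ k : Fin K,
        ∑ u ∈ visits (traj k) (h * τ) ((h + 1) * τ) sa,
          (xhatIm η τ h0 B traj k u sa) ^ 2)
        ≤ ∑ h ∈ Finset.Ico h0 (t / τ - (l - 1) * M), ∑ k : Fin K,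
            ∑ u ∈ visits (traj k) (h * τ) ((h + 1) * τ) sa,
              (21 / 10) * η / K * xhatIm η τ h0 B traj k u sa := by
          apply Finset.sum_le_sum
          intro h hh
          apply Finset.sum_le_sum
          intro k _
          apply Finset.sum_le_sum
          intro u hu
          have hu' : u ∈ Finset.Ico (h * τ) ((h + 1) * τ) := Finset.mem_filter.1 hu |>.1
          have h1 : h0 * τ ≤ u :=
            le_trans (mul_le_mul_left (Finset.mem_Ico.1 hh).1 τ) (Finset.mem_Ico.1 hu').1
          have h2 := hxhat_le k u h1
          have h3 := hxhat_nonneg k u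
          calc (xhatIm η τ h0 B traj k u sa) ^ 2
              = xhatIm η τ h0 B traj k u sa * xhatIm η τ h0 B traj k u sa := sq _
          _ ≤ (21 / 10) * η / K * xhatIm η τ h0 B traj k u sa :=
              mul_le_mul_of_nonneg_right h2 h3
    _ = (21 / 10) * η / K * (∑ h ∈ Finset.Ico h0 (t / τ - (l - 1) * M), ∑ k : Fin K,
            ∑ u ∈ visits (traj k) (h * τ) ((h + 1) * τ) sa,
              xhatIm η τ h0 B traj k u sa) := by
          simp_rw [← Finset.mul_sum]
    _ ≤ (21 / 10) * η / K * (16 * η * μa * M * τ) :=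
          mul_le_mul_of_nonneg_left part2 (by positivity)
    _ ≤ 64 * η ^ 2 * μa * M * τ / K := by
          have e : (21 / 10) * η / K * (16 * η * μa * M * τ)
              = (168 / 5) * (η ^ 2 * μa * M * τ / K) := by ring
          have e2 : 64 * η ^ 2 * μa * (M : ℝ) * τ / K = 64 * (η ^ 2 * μa * M * τ / K) := by ring
          rw [e, e2]
          have h2 : (0 : ℝ) ≤ η ^ 2 * μa * M * τ / K := by positivity
          nlinarith
end
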